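/- In the asymptotic regime, the quantity E_N := Σ_{k=0}^{⌊𝔞_N⌋−1} r_k + Σ_{n=1}^{⌊𝔞_N⌋−1} (1/λ_n)·Σ_{k=n}^{⌊𝔞_N⌋−1} (r_k/r_n) satisfies E_N = O(𝔠_N·log 𝔞_N) as N → ∞, i.e. there exist C > 0 and N₀ such that E_N ≤ C·𝔠_N·log 𝔞_N for all N ≥ N₀. (E_N is the expected first hitting time of ⌊𝔞_N⌋ from state 0 for the continuous-time birth–death process with rates λ, μ modified so that the jump rate from 0 to 1 equals 1.) -/

import Mathlib

open Real Filter Set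

/-- Birth rate `λ_n` of the two-type Moran model. -/
noncomputable def lamR (N : ℕ) (s : ℝ) (n : ℕ) : ℝ :=
  (n:ℝ) * ((1/2) * (1 - (n:ℝ)/(N:ℝ)) + s * (1 - (n:ℝ)/(N:ℝ)))

/-- Death rate `μ_n` of the two-type Moran model. -/
noncomputable def muR (N : ℕ) (m : ℝ) (n : ℕ) : ℝ :=
  (n:ℝ) * ((1/2) * (1 - (n:ℝ)/(N:ℝ)) + m)

/-- Odds-ratio products `r_l = ∏_{i=1}^l μ_i/λ_i`. -/
noncomputable def rR (N : ℕ) (m s : ℝ) (l : ℕ) : ℝ :=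
  ∏ i ∈ Finset.Icc 1 l, muR N m i / lamR N s i

/-- Potential `U(n) = ∑_{ℓ=1}^n log(μ_ℓ/λ_ℓ)`. -/
noncomputable def UR (N : ℕ) (m s : ℝ) (n : ℕ) : ℝ :=
  ∑ l ∈ Finset.Icc 1 n, Real.log (muR N m l / lamR N s l)

/-- `R_k = ∑_{i=0}^{k-1} r_i`. -/
noncomputable def RRk (N : ℕ) (m s : ℝ) (k : ℕ) : ℝ :=
  ∑ i ∈ Finset.range k, rR N m s i

/-- Center of attraction `𝔞 = N(1-ρ)`. -/
noncomputable def aN (N : ℕ) (m s : ℝ) : ℝ := (N:ℝ) * (1 - m/s)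

/-- Critical size `𝔠 = 1/(s-m)`. -/
noncomputable def cN (m s : ℝ) : ℝ := 1/(s - m)

/-- `u = N m (1-ρ)²`. -/
noncomputable def uN (N : ℕ) (m s : ℝ) : ℝ := (N:ℝ) * m * (1 - m/s)^2

/-- Fluctuation scale `σ = (1/s)√(Nm)`. -/
noncomputable def sigN (N : ℕ) (m s : ℝ) : ℝ := (1/s) * Real.sqrt ((N:ℝ) * m)

set_option maxHeartbeats 1000000


lemma geomL {c : ℝ} (hc : 0 < c) (M : ℕ) :
    ∑ j ∈ Finset.range M, Real.exp (-c) ^ j ≤ 1 + 1/c := by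
  have h1 : Real.exp (-c) < 1 := Real.exp_lt_one_iff.mpr (by linarith)
  have h0 : (0:ℝ) < Real.exp (-c) := Real.exp_pos _
  rw [geom_sum_eq (ne_of_lt h1)]
  have hnum : Real.exp (-c) ^ M - 1 ≤ 0 := by
    have := pow_le_one₀ (le_of_lt h0) (le_of_lt h1) (n := M)
    linarith
  have hexp : (1+c) * Real.exp (-c) ≤ 1 := by
    have h2 : c + 1 ≤ Real.exp c := Real.add_one_le_exp c
    have hec : 0 < Real.exp c := Real.exp_pos c
    have : Real.exp (-c) * Real.exp c = 1 := by
      rw [← Real.exp_add]; simp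
    nlinarith [Real.exp_pos (-c)]
  rw [div_le_iff_of_neg (by linarith : Real.exp (-c) - 1 < 0)]
  have h3 : (1 + 1/c) * (Real.exp (-c) - 1) = ((1+c) * Real.exp (-c) - (1+c))/c := by
    field_simp; ring
  rw [h3]
  rw [div_le_iff₀ hc]
  nlinarith [pow_nonneg (le_of_lt h0) M]

lemma harmL : ∀ K : ℕ, 1 ≤ K → ∑ j ∈ Finset.range K, 1/((j:ℝ)+1) ≤ 1 + Real.log K := by
  intro K hK
  induction K, hK using Nat.le_induction with
  | base => simp
  | succ K hK ih =>
    rw [Finset.sum_range_succ]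
    have hK0 : (0:ℝ) < K := by exact_mod_cast hK
    have hstep : 1/((K:ℝ)+1) ≤ Real.log (K+1) - Real.log K := by
      have h1 : Real.log ((K:ℝ)/(K+1)) ≤ (K:ℝ)/(K+1) - 1 :=
        Real.log_le_sub_one_of_pos (by positivity)
      rw [Real.log_div (by positivity) (by positivity)] at h1
      have : (K:ℝ)/(K+1) - 1 = -(1/((K:ℝ)+1)) := by field_simp; ring
      linarith [this ▸ h1]
    push_cast
    linarith

section
variable {N : ℕ} {m s : ℝ}

lemma Npos (hm : 0 < m) (hms : m < s) {i : ℕ} (h1 : 1 ≤ i)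
    (hiA : (i:ℝ) ≤ (N:ℝ) * (1 - m/s)) : 0 < N := by
  rcases Nat.eq_zero_or_pos N with h | h
  · exfalso; rw [h] at hiA; push_cast at hiA
    have : (1:ℝ) ≤ i := by exact_mod_cast h1
    linarith
  · exact h

lemma xge (hm : 0 < m) (hms : m < s) {i : ℕ} (h1 : 1 ≤ i)
    (hiA : (i:ℝ) ≤ (N:ℝ) * (1 - m/s)) :
    m/s ≤ 1 - (i:ℝ)/(N:ℝ) ∧ 1 - (i:ℝ)/(N:ℝ) ≤ 1 ∧
      1 - (i:ℝ)/(N:ℝ) - m/s = ((N:ℝ)*(1-m/s) - i)/N := by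
  have hN : (0:ℝ) < N := by exact_mod_cast Npos hm hms h1 hiA
  have hi0 : (0:ℝ) ≤ (i:ℝ) := Nat.cast_nonneg i
  constructor
  · have h2 : (i:ℝ)/N ≤ 1 - m/s := by
      rw [div_le_iff₀ hN]; linarith [hiA]
    linarith
  constructor
  · have : 0 ≤ (i:ℝ)/N := by positivity
    linarith
  · field_simp; ring

lemma lam_pos (hm : 0 < m) (hms : m < s) {i : ℕ} (h1 : 1 ≤ i)
    (hiA : (i:ℝ) ≤ (N:ℝ) * (1 - m/s)) : 0 < lamR N s i := by
  have hs : 0 < s := hm.trans hms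
  have hρ : 0 < m/s := div_pos hm hs
  obtain ⟨hx, hx1, -⟩ := xge hm hms h1 hiA
  have : 0 < 1 - (i:ℝ)/N := lt_of_lt_of_le hρ hx
  have : (0:ℝ) < i := by exact_mod_cast h1
  unfold lamR
  positivity

lemma mu_pos (hm : 0 < m) (hms : m < s) {i : ℕ} (h1 : 1 ≤ i)
    (hiA : (i:ℝ) ≤ (N:ℝ) * (1 - m/s)) : 0 < muR N m i := by
  have hs : 0 < s := hm.trans hms
  have hρ : 0 < m/s := div_pos hm hs
  obtain ⟨hx, hx1, -⟩ := xge hm hms h1 hiA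
  have h2 : 0 < 1 - (i:ℝ)/N := lt_of_lt_of_le hρ hx
  have h3 : (0:ℝ) < i := by exact_mod_cast h1
  unfold muR
  positivity

/-- single-step ratio bound -/
lemma ratioL (hm : 0 < m) (hms : m < s) (hs : s ≤ 1/2) {i : ℕ} (h1 : 1 ≤ i)
    (hiA : (i:ℝ) ≤ (N:ℝ) * (1 - m/s)) :
    muR N m i / lamR N s i ≤ Real.exp (-(s * ((N:ℝ)*(1-m/s) - i)) / (2*N)) := by
  have hs0 : 0 < s := hm.trans hms
  have hN : (0:ℝ) < N := by exact_mod_cast Npos hm hms h1 hiA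
  obtain ⟨hx, hx1, hxe⟩ := xge hm hms h1 hiA
  set x : ℝ := 1 - (i:ℝ)/N with hxdef
  have hρ : 0 < m/s := div_pos hm hs0
  have hx0 : 0 < x := lt_of_lt_of_le hρ hx
  set δ : ℝ := s * (x - m/s) / 2 with hδdef
  have hδ0 : 0 ≤ δ := by
    have : 0 ≤ x - m/s := by linarith
    positivity
  have hδe : (-(s * ((N:ℝ)*(1-m/s) - i)) / (2*N)) = -δ := by
    rw [hδdef, hxe]; field_simp
  rw [hδe]
  have key : muR N m i / lamR N s i ≤ 1 - δ := by
    rw [div_le_iff₀ (lam_pos hm hms h1 hiA)]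
    unfold muR lamR
    rw [← hxdef]
    have hi : (1:ℝ) ≤ i := by exact_mod_cast h1
    have hsm : s * (m/s) = m := by field_simp
    have hsx : s * (m/s) ≤ s * x := mul_le_mul_of_nonneg_left hx (le_of_lt hs0)
    have hδx : 2*δ = s*x - m := by
      have : s * (x - m/s) = s*x - s*(m/s) := by ring
      rw [hδdef]; rw [this, hsm]; ring
    have hδle : δ * ((1/2)*x + s*x) ≤ δ := by
      have h2 : (1/2)*x + s*x ≤ 1 := by nlinarith
      nlinarith
    have core : (1/2)*x + m ≤ (1-δ)*((1/2)*x + s*x) := by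
      have hmsx : m ≤ s*x - δ := by linarith
      nlinarith
    nlinarith [core, hi]
  calc muR N m i / lamR N s i ≤ 1 - δ := key
    _ ≤ Real.exp (-δ) := by linarith [Real.add_one_le_exp (-δ)]

end

section
variable {N : ℕ} {m s : ℝ}

lemma rR_Ioc (N : ℕ) (m s : ℝ) (l : ℕ) :
    rR N m s l = ∏ i ∈ Finset.Ioc 0 l, muR N m i / lamR N s i := by
  rw [rR, ← Finset.Icc_add_one_left_eq_Ioc, zero_add]

lemma rR_pos (hm : 0 < m) (hms : m < s) {l : ℕ}
    (hlA : (l:ℝ) ≤ (N:ℝ) * (1 - m/s)) : 0 < rR N m s l := by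
  rw [rR]
  apply Finset.prod_pos
  intro i hi
  rw [Finset.mem_Icc] at hi
  have hil : (i:ℝ) ≤ (N:ℝ) * (1 - m/s) := le_trans (by exact_mod_cast hi.2) hlA
  exact div_pos (mu_pos hm hms hi.1 hil) (lam_pos hm hms hi.1 hil)

lemma sumIoc (A : ℝ) : ∀ k n : ℕ, n ≤ k →
    ∑ i ∈ Finset.Ioc n k, (A - (i:ℝ)) =
      ((k:ℝ)-(n:ℝ))*A - ((k:ℝ)*((k:ℝ)+1) - (n:ℝ)*((n:ℝ)+1))/2 := by
  intro k n hnk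
  induction k, hnk using Nat.le_induction with
  | base => simp
  | succ k hk ih =>
    rw [Finset.sum_Ioc_succ_top (by omega : n ≤ k)]
    rw [ih]
    push_cast
    ring

lemma prodL (hm : 0 < m) (hms : m < s) (hs : s ≤ 1/2) {n k : ℕ} (hnk : n ≤ k)
    (hkA : (k:ℝ) ≤ (N:ℝ) * (1 - m/s) - 1) :
    rR N m s k ≤ rR N m s n *
      Real.exp (-(s * ((k:ℝ)-(n:ℝ)) * ((N:ℝ)*(1-m/s)-(n:ℝ))) / (4*N)) := by
  set A : ℝ := (N:ℝ) * (1 - m/s) with hA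
  clear_value A
  rcases eq_or_lt_of_le hnk with rfl | hlt
  · simp
  have hk1 : 1 ≤ k := by omega
  have hN : 0 < N := Npos hm hms hk1 (by linarith)
  have hNR : (0:ℝ) < N := by exact_mod_cast hN
  have hs0 : 0 < s := hm.trans hms
  have hsplit : rR N m s k = rR N m s n * ∏ i ∈ Finset.Ioc n k, muR N m i / lamR N s i := by
    rw [rR_Ioc, rR_Ioc, Finset.prod_Ioc_consecutive _ (Nat.zero_le n) hnk]
  rw [hsplit]
  apply mul_le_mul_of_nonneg_left _ (le_of_lt (rR_pos hm hms (by
    rw [hA] at hkA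
    have : (n:ℝ) ≤ (k:ℝ) := by exact_mod_cast hnk
    linarith)))
  have hmem : ∀ i ∈ Finset.Ioc n k, (1 ≤ i) ∧ ((i:ℝ) ≤ (N:ℝ)*(1-m/s)) := by
    intro i hi
    rw [Finset.mem_Ioc] at hi
    have : (i:ℝ) ≤ (k:ℝ) := by exact_mod_cast hi.2
    rw [hA] at hkA
    exact ⟨by omega, by linarith⟩
  calc (∏ i ∈ Finset.Ioc n k, muR N m i / lamR N s i)
      ≤ ∏ i ∈ Finset.Ioc n k, Real.exp (-(s * (A - (i:ℝ))) / (2*N)) := by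
        apply Finset.prod_le_prod
        · intro i hi
          obtain ⟨h1, h2⟩ := hmem i hi
          exact le_of_lt (div_pos (mu_pos hm hms h1 h2) (lam_pos hm hms h1 h2))
        · intro i hi
          obtain ⟨h1, h2⟩ := hmem i hi
          rw [hA]
          exact ratioL hm hms hs h1 h2
    _ = Real.exp (∑ i ∈ Finset.Ioc n k, (-(s * (A - (i:ℝ))) / (2*N))) :=
        (Real.exp_sum _ _).symm
    _ ≤ Real.exp (-(s * ((k:ℝ)-(n:ℝ)) * (A-(n:ℝ))) / (4*N)) := by
        apply Real.exp_le_exp.mpr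
        have hsum : ∑ i ∈ Finset.Ioc n k, (-(s * (A - (i:ℝ))) / (2*N)) =
            -(s/(2*N)) * ∑ i ∈ Finset.Ioc n k, (A - (i:ℝ)) := by
          rw [Finset.mul_sum]
          apply Finset.sum_congr rfl
          intro i _; ring
        rw [hsum, sumIoc A k n hnk]
        have hcast : (n:ℝ) ≤ (k:ℝ) := by exact_mod_cast hnk
        have hS : ((k:ℝ)-(n:ℝ))*(A-(n:ℝ))/2 ≤
            ((k:ℝ)-(n:ℝ))*A - ((k:ℝ)*((k:ℝ)+1) - (n:ℝ)*((n:ℝ)+1))/2 := by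
          nlinarith
        have hpos : (0:ℝ) < s/(2*(N:ℝ)) := by positivity
        have hmul := mul_le_mul_of_nonneg_left hS (le_of_lt hpos)
        have heq : (s/(2*(N:ℝ)))*((((k:ℝ)-(n:ℝ))*(A-(n:ℝ)))/2) =
            (s*((k:ℝ)-(n:ℝ))*(A-(n:ℝ)))/(4*(N:ℝ)) := by
          field_simp; ring
        rw [neg_div, ← heq]; linarith
end

section
variable {N : ℕ} {m s : ℝ}

lemma H1bound {K : ℕ} (hK : 2 ≤ K) {A : ℝ} (hKA : (K:ℝ) ≤ A) :
    ∑ n ∈ Finset.Ico 1 K, 1/(n:ℝ) ≤ 1 + Real.log A := by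
  have hA0 : (0:ℝ) < A := by
    have : (2:ℝ) ≤ (K:ℝ) := by exact_mod_cast hK
    linarith
  rw [Finset.sum_Ico_eq_sum_range]
  have h1 : ∑ j ∈ Finset.range (K-1), 1/(((1+j:ℕ)):ℝ) =
      ∑ j ∈ Finset.range (K-1), 1/((j:ℝ)+1) := by
    apply Finset.sum_congr rfl
    intro j _; push_cast; ring_nf
  rw [h1]
  calc ∑ j ∈ Finset.range (K-1), 1/((j:ℝ)+1) ≤ 1 + Real.log (K-1 : ℕ) :=
        harmL (K-1) (by omega)
    _ ≤ 1 + Real.log A := by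
        have hle : ((K-1 : ℕ):ℝ) ≤ A := by
          have : ((K-1:ℕ):ℝ) ≤ (K:ℝ) := by exact_mod_cast Nat.sub_le K 1
          linarith
        have hpos : (0:ℝ) < ((K-1:ℕ):ℝ) := by
          have : 1 ≤ K - 1 := by omega
          exact_mod_cast Nat.lt_of_lt_of_le Nat.zero_lt_one this
        linarith [Real.log_le_log hpos hle]

lemma H2bound {K : ℕ} (hK : 2 ≤ K) {A : ℝ} (hKA : (K:ℝ) ≤ A) :
    ∑ n ∈ Finset.Ico 1 K, 1/(A-(n:ℝ)) ≤ 1 + Real.log A := by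
  have hA0 : (0:ℝ) < A := by
    have : (2:ℝ) ≤ (K:ℝ) := by exact_mod_cast hK
    linarith
  have step1 : ∑ n ∈ Finset.Ico 1 K, 1/(A-(n:ℝ)) ≤
      ∑ n ∈ Finset.Ico 1 K, 1/((K:ℝ)-(n:ℝ)) := by
    apply Finset.sum_le_sum
    intro n hn
    rw [Finset.mem_Ico] at hn
    have h1 : (n:ℝ) < (K:ℝ) := by exact_mod_cast hn.2
    apply one_div_le_one_div_of_le (by linarith) (by linarith)
  have step2 : ∑ n ∈ Finset.Ico 1 K, 1/((K:ℝ)-(n:ℝ)) ≤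
      ∑ n ∈ Finset.range K, 1/((K:ℝ)-(n:ℝ)) := by
    apply Finset.sum_le_sum_of_subset_of_nonneg
    · intro n hn
      rw [Finset.mem_Ico] at hn
      exact Finset.mem_range.mpr hn.2
    · intro n hn _
      rw [Finset.mem_range] at hn
      have h1 : (n:ℝ) < (K:ℝ) := by exact_mod_cast hn
      have h2 : (0:ℝ) < (K:ℝ)-(n:ℝ) := by linarith
      positivity
  have step3 : ∑ n ∈ Finset.range K, 1/((K:ℝ)-(n:ℝ)) =
      ∑ j ∈ Finset.range K, 1/((j:ℝ)+1) := by
    rw [← Finset.sum_range_reflect (fun j => 1/((j:ℝ)+1)) K]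
    apply Finset.sum_congr rfl
    intro j hj
    rw [Finset.mem_range] at hj
    have h3 : ((K - 1 - j:ℕ):ℝ) = (K:ℝ) - 1 - (j:ℝ) := by
      have h1 : 1 + j ≤ K := by omega
      push_cast [Nat.sub_sub, Nat.cast_sub h1]
      ring
    rw [h3]
    ring_nf
  have step4 : ∑ j ∈ Finset.range K, 1/((j:ℝ)+1) ≤ 1 + Real.log K :=
    harmL K (by omega)
  have step5 : Real.log K ≤ Real.log A :=
    Real.log_le_log (by positivity) hKA
  linarith

lemma mainL (N : ℕ) (m s : ℝ) (hm : 0 < m) (hms : m < s) (hs : s ≤ 1/2)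
    {ρ₀ : ℝ} (hρ₀ : 0 < ρ₀) (hρ₀1 : ρ₀ ≤ 1) (hρ : ρ₀ ≤ m/s)
    (hA3 : 3 ≤ (N:ℝ) * (1 - m/s)) (hc1 : 1 ≤ 1/(s-m))
    (hlog1 : 1 ≤ Real.log ((N:ℝ) * (1 - m/s))) :
    (∑ i ∈ Finset.range ⌊(N:ℝ) * (1 - m/s)⌋₊, rR N m s i) +
      ∑ n ∈ Finset.Ico 1 ⌊(N:ℝ) * (1 - m/s)⌋₊,
        (1 / lamR N s n) *
          ∑ k ∈ Finset.Ico n ⌊(N:ℝ) * (1 - m/s)⌋₊, rR N m s k / rR N m s n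
      ≤ (41/ρ₀) * (1/(s-m)) * Real.log ((N:ℝ) * (1 - m/s)) := by
  have hs0 : 0 < s := hm.trans hms
  have hsm : 0 < s - m := by linarith
  obtain ⟨A, hA⟩ : ∃ x : ℝ, x = (N:ℝ) * (1 - m/s) := ⟨_, rfl⟩
  obtain ⟨c, hc⟩ : ∃ x : ℝ, x = 1/(s-m) := ⟨_, rfl⟩
  rw [← hA, ← hc]
  rw [← hA] at hA3 hlog1
  rw [← hc] at hc1
  set K : ℕ := ⌊A⌋₊ with hKdef
  have hρ0 : 0 < m/s := div_pos hm hs0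
  have hρ1 : m/s < 1 := (div_lt_one hs0).mpr hms
  have hA0 : (0:ℝ) < A := by linarith
  have hKA : (K:ℝ) ≤ A := Nat.floor_le hA0.le
  have hK3 : 3 ≤ K := Nat.le_floor (by exact_mod_cast hA3)
  have hKR : (3:ℝ) ≤ (K:ℝ) := by exact_mod_cast hK3
  clear_value K
  have hNA : A ≤ (N:ℝ) := by
    rw [hA]
    have h0N : (0:ℝ) ≤ (N:ℝ) := Nat.cast_nonneg N
    nlinarith
  have hN0 : (0:ℝ) < (N:ℝ) := by linarith
  have hNsA : s * A = (s-m) * (N:ℝ) := by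
    rw [hA]; field_simp
  have hc0 : 0 < c := by rw [hc]; positivity
  -- first sum
  have hfirst : (∑ i ∈ Finset.range K, rR N m s i) ≤ 1 + 4*c := by
    have hr0 : rR N m s 0 = 1 := by simp [rR]
    have step1 : (∑ i ∈ Finset.range K, rR N m s i) ≤
        ∑ i ∈ Finset.range K, Real.exp (-(s*A/(4*(N:ℝ)))) ^ i := by
      apply Finset.sum_le_sum
      intro i hi
      rw [Finset.mem_range] at hi
      have hiA : (i:ℝ) ≤ A - 1 := by
        have h4 : i ≤ K - 1 := by omega
        have h2 : (i:ℝ) ≤ ((K-1:ℕ):ℝ) := by exact_mod_cast h4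
        have h3 : ((K-1:ℕ):ℝ) = (K:ℝ) - 1 := by
          push_cast [Nat.cast_sub (by omega : 1 ≤ K)]; ring
        linarith [h3 ▸ h2]
      have hp := prodL (N := N) hm hms hs (Nat.zero_le i) (by rw [← hA]; exact hiA)
      rw [← hA, hr0, one_mul] at hp
      calc rR N m s i ≤ Real.exp (-(s * ((i:ℝ)-((0:ℕ):ℝ)) * (A-((0:ℕ):ℝ))) / (4*N)) := hp
        _ = Real.exp (-(s*A/(4*(N:ℝ)))) ^ i := by
            rw [← Real.exp_nat_mul]
            congr 1
            push_cast
            ring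
    have step2 : ∑ i ∈ Finset.range K, Real.exp (-(s*A/(4*(N:ℝ)))) ^ i ≤
        1 + 1/(s*A/(4*(N:ℝ))) := geomL (by positivity) K
    have step3 : 1/(s*A/(4*(N:ℝ))) = 4*c := by
      rw [hc, hNsA]
      field_simp
    linarith
  -- second sum
  have hsecond : (∑ n ∈ Finset.Ico 1 K,
      (1 / lamR N s n) * ∑ k ∈ Finset.Ico n K, rR N m s k / rR N m s n) ≤
      ∑ n ∈ Finset.Ico 1 K,
        ((2/(m/s) + 8*c/(m/s))*(1/(n:ℝ)) + (8*c/(m/s))*(1/(A-(n:ℝ)))) := by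
    apply Finset.sum_le_sum
    intro n hn
    rw [Finset.mem_Ico] at hn
    obtain ⟨hn1, hnK⟩ := hn
    have hn1R : (1:ℝ) ≤ (n:ℝ) := by exact_mod_cast hn1
    have hnA1 : (n:ℝ) ≤ A - 1 := by
      have hn' : n + 1 ≤ K := hnK
      have h2 : ((n:ℝ)+1) ≤ (K:ℝ) := by exact_mod_cast hn'
      linarith
    have hnA : (n:ℝ) ≤ (N:ℝ)*(1-m/s) := by rw [← hA]; linarith
    have hrn : 0 < rR N m s n := rR_pos hm hms hnA
    have hlam : 0 < lamR N s n := lam_pos hm hms hn1 hnA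
    have hAn : (0:ℝ) < A - (n:ℝ) := by linarith
    have hinner : (∑ k ∈ Finset.Ico n K, rR N m s k / rR N m s n) ≤
        1 + 4*(N:ℝ)/(s*(A-(n:ℝ))) := by
      have e1 : (∑ k ∈ Finset.Ico n K, rR N m s k / rR N m s n) ≤
          ∑ k ∈ Finset.Ico n K, Real.exp (-(s*(A-(n:ℝ))/(4*(N:ℝ)))) ^ (k - n) := by
        apply Finset.sum_le_sum
        intro k hk
        rw [Finset.mem_Ico] at hk
        obtain ⟨hkn, hkK⟩ := hk
        have hkA1 : (k:ℝ) ≤ A - 1 := by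
          have hk' : k + 1 ≤ K := hkK
          have h2 : ((k:ℝ)+1) ≤ (K:ℝ) := by exact_mod_cast hk'
          linarith
        have hp := prodL (N := N) hm hms hs hkn (by rw [← hA]; exact hkA1)
        rw [← hA] at hp
        rw [div_le_iff₀ hrn]
        calc rR N m s k ≤ rR N m s n *
              Real.exp (-(s * ((k:ℝ)-(n:ℝ)) * (A-(n:ℝ))) / (4*N)) := hp
          _ = Real.exp (-(s*(A-(n:ℝ))/(4*(N:ℝ)))) ^ (k - n) * rR N m s n := by
              rw [mul_comm]
              congr 1
              rw [← Real.exp_nat_mul]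
              congr 1
              have h5 : ((k - n:ℕ):ℝ) = (k:ℝ) - (n:ℝ) := by
                push_cast [Nat.cast_sub hkn]; ring
              rw [h5]
              ring
      have e2 : ∑ k ∈ Finset.Ico n K, Real.exp (-(s*(A-(n:ℝ))/(4*(N:ℝ)))) ^ (k - n) =
          ∑ j ∈ Finset.range (K - n), Real.exp (-(s*(A-(n:ℝ))/(4*(N:ℝ)))) ^ j := by
        rw [Finset.sum_Ico_eq_sum_range]
        apply Finset.sum_congr rfl
        intro j _
        congr 1
        omega
      have e3 : ∑ j ∈ Finset.range (K - n), Real.exp (-(s*(A-(n:ℝ))/(4*(N:ℝ)))) ^ j ≤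
          1 + 1/(s*(A-(n:ℝ))/(4*(N:ℝ))) := geomL (by positivity) _
      have e4 : 1/(s*(A-(n:ℝ))/(4*(N:ℝ))) = 4*(N:ℝ)/(s*(A-(n:ℝ))) := by
        field_simp
      linarith [e1, e2, e3, e4]
    have hlamb : 1 / lamR N s n ≤ 2/((m/s)*(n:ℝ)) := by
      have hx : m/s ≤ 1 - (n:ℝ)/(N:ℝ) := (xge hm hms hn1 hnA).1
      have hn0 : (0:ℝ) < (n:ℝ) := by linarith
      have hxpos : (0:ℝ) ≤ 1 - (n:ℝ)/(N:ℝ) := by linarith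
      have hlow : (m/s)*(n:ℝ)/2 ≤ lamR N s n := by
        rw [lamR]
        nlinarith [mul_le_mul_of_nonneg_left hx (le_of_lt hn0),
          mul_nonneg (mul_nonneg hs0.le hxpos) hn0.le]
      have h2 : (0:ℝ) < (m/s)*(n:ℝ)/2 := by positivity
      calc 1 / lamR N s n ≤ 1 / ((m/s)*(n:ℝ)/2) := one_div_le_one_div_of_le h2 hlow
        _ = 2/((m/s)*(n:ℝ)) := one_div_div _ _
    have hinn0 : 0 ≤ ∑ k ∈ Finset.Ico n K, rR N m s k / rR N m s n := by
      apply Finset.sum_nonneg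
      intro k hk
      rw [Finset.mem_Ico] at hk
      have hkA : (k:ℝ) ≤ (N:ℝ)*(1-m/s) := by
        have h6 : (k:ℝ) < (K:ℝ) := by exact_mod_cast hk.2
        rw [← hA]; linarith
      exact le_of_lt (div_pos (rR_pos hm hms hkA) hrn)
    have hmul : (1 / lamR N s n) * (∑ k ∈ Finset.Ico n K, rR N m s k / rR N m s n) ≤
        (2/((m/s)*(n:ℝ))) * (1 + 4*(N:ℝ)/(s*(A-(n:ℝ)))) :=
      mul_le_mul hlamb hinner hinn0 (by positivity)
    have hterm : (2/((m/s)*(n:ℝ))) * (1 + 4*(N:ℝ)/(s*(A-(n:ℝ)))) =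
        (2/(m/s) + 8*c/(m/s))*(1/(n:ℝ)) + (8*c/(m/s))*(1/(A-(n:ℝ))) := by
      have hn0 : (0:ℝ) < (n:ℝ) := by linarith
      have hcA : c = (N:ℝ)/(s*A) := by
        rw [hc, hNsA]
        field_simp
      rw [hcA]
      field_simp
      ring
    rw [hterm] at hmul
    exact hmul
  -- harmonic bounds and assembly
  have hH1 := H1bound (by omega : 2 ≤ K) hKA
  have hH2 := H2bound (by omega : 2 ≤ K) hKA
  have hsum2 : ∑ n ∈ Finset.Ico 1 K,
      ((2/(m/s) + 8*c/(m/s))*(1/(n:ℝ)) + (8*c/(m/s))*(1/(A-(n:ℝ)))) =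
      (2/(m/s) + 8*c/(m/s)) * (∑ n ∈ Finset.Ico 1 K, 1/(n:ℝ)) +
      (8*c/(m/s)) * (∑ n ∈ Finset.Ico 1 K, 1/(A-(n:ℝ))) := by
    rw [Finset.sum_add_distrib, Finset.mul_sum, Finset.mul_sum]
  have hL : 1 ≤ Real.log A := hlog1
  have hρρ : 1/(m/s) ≤ 1/ρ₀ := one_div_le_one_div_of_le hρ₀ hρ
  have hρ' : (0:ℝ) < 1/(m/s) := by positivity
  have hsum3 : (2/(m/s) + 8*c/(m/s)) * (∑ n ∈ Finset.Ico 1 K, 1/(n:ℝ)) +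
      (8*c/(m/s)) * (∑ n ∈ Finset.Ico 1 K, 1/(A-(n:ℝ))) ≤
      (2/(m/s) + 8*c/(m/s)) * (1 + Real.log A) + (8*c/(m/s)) * (1 + Real.log A) := by
    have h1 : (0:ℝ) ≤ 2/(m/s) + 8*c/(m/s) := by positivity
    have h2 : (0:ℝ) ≤ 8*c/(m/s) := by positivity
    have k1 := mul_le_mul_of_nonneg_left hH1 h1
    have k2 := mul_le_mul_of_nonneg_left hH2 h2
    linarith
  have hfin1 : 1 + 4*c ≤ 5 * c * Real.log A := by
    nlinarith [mul_le_mul_of_nonneg_left hL hc0.le]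
  have hfin2 : (2/(m/s) + 8*c/(m/s)) * (1 + Real.log A) +
      (8*c/(m/s)) * (1 + Real.log A) ≤ 36 * (1/ρ₀) * c * Real.log A := by
    have e1 : (2/(m/s) + 8*c/(m/s)) * (1 + Real.log A) +
        (8*c/(m/s)) * (1 + Real.log A) = (2 + 16*c) * (1/(m/s)) * (1 + Real.log A) := by
      ring
    rw [e1]
    have h1 : (2 + 16*c) * (1/(m/s)) ≤ 18*c*(1/ρ₀) :=
      mul_le_mul (by linarith) hρρ hρ'.le (by positivity)
    have h2 : (1 + Real.log A) ≤ 2 * Real.log A := by linarith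
    have h3 := mul_le_mul h1 h2 (by linarith) (by positivity)
    nlinarith [h3]
  have hfin3 : 5 * c * Real.log A ≤ 5 * (1/ρ₀) * c * Real.log A := by
    have h5 : (1:ℝ) ≤ 1/ρ₀ := by
      simpa using one_div_le_one_div_of_le hρ₀ hρ₀1
    nlinarith [mul_nonneg hc0.le (by linarith : (0:ℝ) ≤ Real.log A)]
  have hgoal : (41/ρ₀) * c * Real.log A =
      5 * (1/ρ₀) * c * Real.log A + 36 * (1/ρ₀) * c * Real.log A := by ring
  linarith [hfirst, hsecond, hsum2, hsum3, hfin1, hfin2, hfin3]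

end

theorem stmt14 (m s : ℕ → ℝ)
    (hms : ∀ N, 0 < m N ∧ m N < s N)
    (hNm : Filter.Tendsto (fun N : ℕ => (N:ℝ) * m N) Filter.atTop Filter.atTop)
    (hs0 : Filter.Tendsto s Filter.atTop (nhds 0))
    (hρlim : ∃ ρs ∈ Set.Ioc (0:ℝ) 1,
      Filter.Tendsto (fun N => m N / s N) Filter.atTop (nhds ρs))
    (hu : Filter.Tendsto (fun N : ℕ => uN N (m N) (s N)) Filter.atTop Filter.atTop) :
    ∃ C > (0:ℝ), ∀ᶠ N : ℕ in Filter.atTop,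
      RRk N (m N) (s N) ⌊aN N (m N) (s N)⌋₊ +
        ∑ n ∈ Finset.Ico 1 ⌊aN N (m N) (s N)⌋₊,
          (1 / lamR N (s N) n) *
            ∑ k ∈ Finset.Ico n ⌊aN N (m N) (s N)⌋₊,
              rR N (m N) (s N) k / rR N (m N) (s N) n
      ≤ C * cN (m N) (s N) * Real.log (aN N (m N) (s N)) := by
  obtain ⟨ρs, ⟨hρs0, hρs1⟩, hρt⟩ := hρlim
  set ρ₀ : ℝ := ρs/2 with hρ₀def
  have hρ₀ : 0 < ρ₀ := by positivity
  have hρ₀1 : ρ₀ ≤ 1 := by rw [hρ₀def]; linarith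
  refine ⟨41/ρ₀, by positivity, ?_⟩
  have E1 : ∀ᶠ N : ℕ in Filter.atTop, ρ₀ ≤ m N / s N :=
    (hρt.eventually (eventually_gt_nhds (by linarith : ρ₀ < ρs))).mono
      (fun N h => le_of_lt h)
  have E2 : ∀ᶠ N : ℕ in Filter.atTop, s N ≤ 1/2 :=
    (hs0.eventually (eventually_lt_nhds (by norm_num : (0:ℝ) < 1/2))).mono
      (fun N h => le_of_lt h)
  have E3 : ∀ᶠ N : ℕ in Filter.atTop, 3 ≤ uN N (m N) (s N) :=
    hu.eventually_ge_atTop 3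
  filter_upwards [E1, E2, E3] with N h1 h2 h3
  obtain ⟨hm, hmsN⟩ := hms N
  have hsN0 : 0 < s N := hm.trans hmsN
  have hsm : 0 < s N - m N := by linarith
  have hρ1 : m N / s N < 1 := (div_lt_one hsN0).mpr hmsN
  have hρ0' : 0 < m N / s N := div_pos hm hsN0
  -- A ≥ 3
  have hx0 : 0 < m N * (1 - m N / s N) := by nlinarith
  have hx1 : m N * (1 - m N / s N) ≤ 1 := by nlinarith
  have hid : aN N (m N) (s N) * (m N * (1 - m N / s N)) = uN N (m N) (s N) := by
    simp only [aN, uN]; ring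
  have hA3 : 3 ≤ aN N (m N) (s N) := by nlinarith [hid, hx0, hx1, h3]
  have hA0 : 0 < aN N (m N) (s N) := by linarith
  -- c ≥ 1
  have hc1 : 1 ≤ 1/(s N - m N) := by
    rw [le_div_iff₀ hsm]; linarith
  -- log ≥ 1
  have hlog1 : 1 ≤ Real.log (aN N (m N) (s N)) := by
    rw [Real.le_log_iff_exp_le hA0]
    have := Real.exp_one_lt_d9
    linarith
  have hmain := mainL N (m N) (s N) hm hmsN h2 hρ₀ hρ₀1 h1
    (by exact hA3) hc1 (by exact hlog1)
  simp only [RRk, aN, cN]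
  exact hmain
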